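/- arXiv:1602.04967 — 2 statements merged into one kernel-verified Lean document; each statement's English description precedes it below -/
import Mathlib

section
/- Let A be a finite set, let P ⊆ Sym(A^ℓ) and Q ⊆ Sym(A^n), let h, k, m ∈ ℕ with h + n ≥ k + ℓ. Suppose that every h-controlled Q-permutation of A^{h+n} belongs to the subgroup of Sym(A^{h+n}) generated by all extensions to arity h+n of k-controlled P-permutations (which are permutations of A^{k+ℓ}). Then every (h+m)-controlled Q-permutation of A^{h+m+n} belongs to the subgroup of Sym(A^{h+m+n}) generated by all extensions to arity h+m+n of (k+m)-controlled P-permutations. -/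
/-- The wire permutation `π_α` of `A^n` induced by `α ∈ S_n`: `π_α(x) i = x (α⁻¹ i)`. -/
def wirePerm {A : Type*} {n : ℕ} (α : Equiv.Perm (Fin n)) : Equiv.Perm (Fin n → A) :=
  Equiv.arrowCongr α (Equiv.refl A)

/-- Splitting `A^(k+ℓ)` into `A^k × A^ℓ`. -/
def splitEquiv (A : Type*) (k ℓ : ℕ) : (Fin (k + ℓ) → A) ≃ (Fin k → A) × (Fin ℓ → A) :=
  (Equiv.arrowCongr finSumFinEquiv.symm (Equiv.refl A)).trans
    (Equiv.sumArrowEquivProdArrow _ _ A)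

/-- `f ⊕ id`: the permutation of `A^n` acting as `f` on the first `ℓ` coordinates and
fixing the remaining ones. -/
def oplusId {A : Type*} {ℓ n : ℕ} (h : ℓ ≤ n) (f : Equiv.Perm (Fin ℓ → A)) :
    Equiv.Perm (Fin n → A) :=
  (((Equiv.arrowCongr (finCongr (Nat.add_sub_cancel' h).symm) (Equiv.refl A)).trans
    (splitEquiv A ℓ (n - ℓ))).symm).permCongr
      (Equiv.prodCongr f (Equiv.refl (Fin (n - ℓ) → A)))

/-- `g ∈ Sym(A^n)` is an extension of `f ∈ Sym(A^ℓ)` iff it is a conjugate of `f ⊕ id`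
by a wire permutation. -/
def IsExtensionOf {A : Type*} {ℓ n : ℕ} (f : Equiv.Perm (Fin ℓ → A))
    (g : Equiv.Perm (Fin n → A)) : Prop :=
  ∃ (h : ℓ ≤ n) (α : Equiv.Perm (Fin n)),
    g = wirePerm α * oplusId h f * (wirePerm α)⁻¹

/-- The `w`-controlled permutation `f_{w,p}` of `A^(k+ℓ)`: maps `(u,v)` to `(u, p v)`
if `u = w` and fixes it otherwise. -/
def controlledPerm {A : Type*} [DecidableEq A] {k ℓ : ℕ} (w : Fin k → A)
    (p : Equiv.Perm (Fin ℓ → A)) : Equiv.Perm (Fin (k + ℓ) → A) :=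
  (splitEquiv A k ℓ).symm.permCongr
    { toFun := fun uv => (uv.1, if uv.1 = w then p uv.2 else uv.2)
      invFun := fun uv => (uv.1, if uv.1 = w then p.symm uv.2 else uv.2)
      left_inv := fun uv => by by_cases h : uv.1 = w <;> simp [h, Prod.ext_iff]
      right_inv := fun uv => by by_cases h : uv.1 = w <;> simp [h, Prod.ext_iff] }

/-- The `k`-controlled `P`-permutations of `A^(k+ℓ)`: wire-permutation conjugates of the
permutations `f_{w,p}` with `p ∈ P`. -/
def ControlledPerms {A : Type*} [DecidableEq A] {ℓ : ℕ} (k : ℕ)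
    (P : Set (Equiv.Perm (Fin ℓ → A))) : Set (Equiv.Perm (Fin (k + ℓ) → A)) :=
  { g | ∃ w : Fin k → A, ∃ p ∈ P, ∃ α : Equiv.Perm (Fin (k + ℓ)),
      g = wirePerm α * controlledPerm w p * (wirePerm α)⁻¹ }

/-!
Split the control word `w ∈ A^(h+m)` as `(w₁, w₂)`. Up to renaming wires, `f_{w,q}` is the
`w₂`-controlled version of `f_{w₁,q}`, and adding the control `w₂` is a group homomorphism
`Sym(A^(h+n)) → Sym(A^(m+h+n))`. It maps the subgroup generated by extensions of `k`-controlled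
`P`-permutations into the subgroup generated by the images of the generators, and the
`w₂`-controlled version of an extension of `f_{v,p}` is, up to renaming wires, an extension of
the `(k+m)`-controlled `P`-permutation `f_{(v,w₂),p}`, hence itself one of the new generators.
-/

open Equiv

section Rewire

variable {A I J K : Type*}

def rewire (ρ : I ≃ J) : Perm (I → A) ≃* Perm (J → A) :=
  (arrowCongr ρ (Equiv.refl A)).permCongrHom

theorem rewire_apply (ρ : I ≃ J) (x : Perm (I → A)) (z : J → A) :
    rewire ρ x z = x (z ∘ ρ) ∘ ρ.symm :=
  rfl

theorem rewire_eq_conj {n : ℕ} (α : Perm (Fin n)) (x : Perm (Fin n → A)) :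
    rewire α x = wirePerm α * x * (wirePerm α)⁻¹ :=
  rfl

def WireEquivalent (x : Perm (I → A)) (y : Perm (J → A)) : Prop :=
  ∃ ρ : I ≃ J, rewire ρ x = y

infix:50 " ∼ʷ " => WireEquivalent

theorem WireEquivalent.of_rewire (ρ : I ≃ J) (x : Perm (I → A)) : x ∼ʷ rewire ρ x :=
  ⟨ρ, rfl⟩

theorem WireEquivalent.symm {x : Perm (I → A)} {y : Perm (J → A)} (h : x ∼ʷ y) : y ∼ʷ x := by
  obtain ⟨ρ, rfl⟩ := h
  exact ⟨ρ.symm, by ext z i; simp [rewire_apply, Function.comp_assoc]⟩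

theorem WireEquivalent.trans {x : Perm (I → A)} {y : Perm (J → A)} {z : Perm (K → A)}
    (hxy : x ∼ʷ y) (hyz : y ∼ʷ z) : x ∼ʷ z := by
  obtain ⟨ρ, rfl⟩ := hxy
  obtain ⟨σ, rfl⟩ := hyz
  exact ⟨ρ.trans σ, rfl⟩

instance : @Trans (Perm (I → A)) (Perm (J → A)) (Perm (K → A))
    WireEquivalent WireEquivalent WireEquivalent :=
  ⟨WireEquivalent.trans⟩

theorem wireEquivalent_iff_conj {n : ℕ} {x y : Perm (Fin n → A)} :
    x ∼ʷ y ↔ ∃ α : Perm (Fin n), y = wirePerm α * x * (wirePerm α)⁻¹ :=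
  ⟨fun ⟨α, h⟩ => ⟨α, h.symm⟩, fun ⟨α, h⟩ => ⟨α, h.symm⟩⟩

end Rewire

def Equiv.Perm.prodExtendRightHom {U V : Type*} [DecidableEq U] (u : U) :
    Perm V →* Perm (U × V) where
  toFun := Perm.prodExtendRight u
  map_one' := by ext ⟨a, b⟩ <;> by_cases h : a = u <;> simp [Perm.prodExtendRight, h]
  map_mul' p q := by
    ext ⟨a, b⟩ <;> by_cases h : a = u <;> simp [Perm.prodExtendRight, Perm.mul_apply, h]

theorem eq_sumElim_iff {K L A : Type*} (x : K ⊕ L → A) (f : K → A) (g : L → A) :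
    x = Sum.elim f g ↔ x ∘ Sum.inl = f ∧ x ∘ Sum.inr = g := by
  constructor
  · rintro rfl
    exact ⟨rfl, rfl⟩
  · rintro ⟨rfl, rfl⟩
    exact (Sum.elim_comp_inl_inr x).symm

section SumIndexed

variable {A K K' L L' I I' R R' : Type*}

/-- `f_{w,p}` with control wires `K` and target wires `L`. Indexing wires by `Fin k ⊕ Fin ℓ`
rather than `Fin (k + ℓ)` turns every rearrangement of wires into an `Equiv` between index types,
with no arithmetic on `Fin`. -/
def ctrl [DecidableEq (K → A)] (w : K → A) : Perm (L → A) →* Perm (K ⊕ L → A) :=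
  (sumArrowEquivProdArrow K L A).symm.permCongrHom.toMonoidHom.comp (Perm.prodExtendRightHom w)

def oplusIdSum (f : Perm (I → A)) : Perm (I ⊕ R → A) :=
  (sumArrowEquivProdArrow I R A).symm.permCongr (prodCongr f (Equiv.refl _))

theorem ctrl_apply [DecidableEq (K → A)] (w : K → A) (p : Perm (L → A)) (x : K ⊕ L → A) :
    ctrl w p x = if x ∘ Sum.inl = w then Sum.elim w (p (x ∘ Sum.inr)) else x := by
  have hx : sumArrowEquivProdArrow K L A x = (x ∘ Sum.inl, x ∘ Sum.inr) := rfl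
  change (sumArrowEquivProdArrow K L A).symm.permCongr (Perm.prodExtendRight w p) x = _
  split_ifs with h
  · simp only [Perm.prodExtendRight, permCongr_apply, symm_symm, hx, h, coe_fn_mk, ↓reduceIte]
    rfl
  · simp only [Perm.prodExtendRight, permCongr_apply, symm_symm, hx, h, coe_fn_mk, ↓reduceIte]
    exact Sum.elim_comp_inl_inr x

theorem oplusIdSum_apply (f : Perm (I → A)) (x : I ⊕ R → A) :
    oplusIdSum f x = Sum.elim (f (x ∘ Sum.inl)) (x ∘ Sum.inr) :=
  rfl

theorem rewire_sumCongr_ctrl [DecidableEq (K → A)] [DecidableEq (K' → A)] (ρ : K ≃ K')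
    (σ : L ≃ L') (w : K → A) (p : Perm (L → A)) :
    rewire (sumCongr ρ σ) (ctrl w p) = ctrl (w ∘ ρ.symm) (rewire σ p) := by
  ext x j
  have h₁ : (x ∘ sumCongr ρ σ) ∘ Sum.inl = (x ∘ Sum.inl) ∘ ρ := rfl
  have h₂ : (x ∘ sumCongr ρ σ) ∘ Sum.inr = (x ∘ Sum.inr) ∘ σ := rfl
  simp only [rewire_apply, ctrl_apply, h₁, h₂, ← eq_comp_symm]
  split_ifs <;> rcases j with i | j <;> simp

theorem rewire_sumCongr_oplusIdSum (ρ : I ≃ I') (σ : R ≃ R') (f : Perm (I → A)) :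
    rewire (sumCongr ρ σ) (oplusIdSum f) = oplusIdSum (rewire ρ f) := by
  ext x (i | j)
  · rfl
  · simp [rewire_apply, oplusIdSum_apply]

theorem rewire_ctrl_ctrl [DecidableEq (K → A)] [DecidableEq (K' → A)]
    [DecidableEq (K' ⊕ K → A)] (w : K → A) (w' : K' → A) (q : Perm (L → A)) :
    rewire (sumAssoc K' K L).symm (ctrl w' (ctrl w q)) = ctrl (Sum.elim w' w) q := by
  ext x j
  have h₁ : (x ∘ (sumAssoc K' K L).symm) ∘ Sum.inl = (x ∘ Sum.inl) ∘ Sum.inl := rfl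
  have h₂ : ((x ∘ (sumAssoc K' K L).symm) ∘ Sum.inr) ∘ Sum.inl = (x ∘ Sum.inl) ∘ Sum.inr := rfl
  have h₃ : ((x ∘ (sumAssoc K' K L).symm) ∘ Sum.inr) ∘ Sum.inr = x ∘ Sum.inr := rfl
  simp only [rewire_apply, ctrl_apply, h₁, h₂, h₃, eq_sumElim_iff]
  clear h₁ h₂ h₃
  split_ifs <;> subst_vars <;> rcases j with (i | i) | j <;> simp_all

theorem rewire_ctrl_oplusIdSum [DecidableEq (K → A)] (w : K → A) (f : Perm (I → A)) :
    rewire (sumAssoc K I R).symm (ctrl w (oplusIdSum f)) = oplusIdSum (ctrl w f) := by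
  ext x j
  have h₁ : (x ∘ (sumAssoc K I R).symm) ∘ Sum.inl = (x ∘ Sum.inl) ∘ Sum.inl := rfl
  have h₂ : ((x ∘ (sumAssoc K I R).symm) ∘ Sum.inr) ∘ Sum.inl = (x ∘ Sum.inl) ∘ Sum.inr := rfl
  have h₃ : ((x ∘ (sumAssoc K I R).symm) ∘ Sum.inr) ∘ Sum.inr = x ∘ Sum.inr := rfl
  simp only [rewire_apply, ctrl_apply, oplusIdSum_apply, h₁, h₂, h₃]
  clear h₁ h₂ h₃
  split_ifs <;> subst_vars <;> rcases j with (i | i) | j <;> simp_all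

theorem WireEquivalent.ctrl [DecidableEq (K → A)] (w : K → A) {p : Perm (L → A)}
    {q : Perm (L' → A)} (h : p ∼ʷ q) : ctrl w p ∼ʷ ctrl w q := by
  obtain ⟨σ, rfl⟩ := h
  exact ⟨sumCongr (Equiv.refl K) σ, rewire_sumCongr_ctrl _ _ _ _⟩

theorem WireEquivalent.oplusIdSum {f : Perm (I → A)} {g : Perm (I' → A)} (h : f ∼ʷ g)
    (σ : R ≃ R') : (oplusIdSum f : Perm (I ⊕ R → A)) ∼ʷ (oplusIdSum g : Perm (I' ⊕ R' → A)) := by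
  obtain ⟨ρ, rfl⟩ := h
  exact ⟨sumCongr ρ σ, rewire_sumCongr_oplusIdSum _ _ _⟩

theorem ctrl_wireEquivalent_ctrl_comp [DecidableEq (K → A)] [DecidableEq (K' → A)]
    (ρ : K ≃ K') (w : K → A) (p : Perm (L → A)) : ctrl w p ∼ʷ ctrl (w ∘ ρ.symm) p :=
  ⟨sumCongr ρ (Equiv.refl L), rewire_sumCongr_ctrl _ _ _ _⟩

theorem ctrl_ctrl_wireEquivalent [DecidableEq (K → A)] [DecidableEq (K' → A)]
    [DecidableEq (K' ⊕ K → A)] (w : K → A) (w' : K' → A) (q : Perm (L → A)) :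
    ctrl w' (ctrl w q) ∼ʷ ctrl (Sum.elim w' w) q :=
  ⟨_, rewire_ctrl_ctrl w w' q⟩

theorem ctrl_oplusIdSum_wireEquivalent [DecidableEq (K → A)] (w : K → A) (f : Perm (I → A)) :
    ctrl w (oplusIdSum f : Perm (I ⊕ R → A)) ∼ʷ
      (oplusIdSum (ctrl w f) : Perm ((K ⊕ I) ⊕ R → A)) :=
  ⟨(sumAssoc K I R).symm, rewire_ctrl_oplusIdSum w f⟩

end SumIndexed

section FinIndexed

variable {A : Type*}

theorem splitEquiv_symm_permCongr {k ℓ : ℕ} (x : Perm ((Fin k → A) × (Fin ℓ → A))) :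
    (splitEquiv A k ℓ).symm.permCongr x =
      rewire finSumFinEquiv ((sumArrowEquivProdArrow _ _ A).symm.permCongr x) :=
  rfl

theorem oplusIdSum_wireEquivalent_oplusId {ℓ n : ℕ} (h : ℓ ≤ n) (f : Perm (Fin ℓ → A)) :
    (oplusIdSum f : Perm (Fin ℓ ⊕ Fin (n - ℓ) → A)) ∼ʷ oplusId h f :=
  ⟨finSumFinEquiv.trans (finCongr (Nat.add_sub_cancel' h)), rfl⟩

variable [DecidableEq A]

theorem ctrl_wireEquivalent_controlledPerm {k ℓ : ℕ} (w : Fin k → A) (p : Perm (Fin ℓ → A)) :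
    ctrl w p ∼ʷ controlledPerm w p := by
  refine ⟨finSumFinEquiv, ?_⟩
  rw [controlledPerm, splitEquiv_symm_permCongr]
  change rewire _ ((sumArrowEquivProdArrow _ _ A).symm.permCongr (Perm.prodExtendRight w p)) = _
  congr 2
  ext ⟨u, v⟩ <;> by_cases h : u = w <;> simp [Perm.prodExtendRight, h]

theorem ctrl_controlledPerm_wireEquivalent {a b n : ℕ} (w₁ : Fin a → A) (w₂ : Fin b → A)
    (q : Perm (Fin n → A)) :
    ctrl w₂ (controlledPerm w₁ q) ∼ʷ controlledPerm (Fin.append w₁ w₂) q :=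
  calc ctrl w₂ (controlledPerm w₁ q)
      _ ∼ʷ ctrl w₂ (ctrl w₁ q) := (ctrl_wireEquivalent_controlledPerm w₁ q).symm.ctrl w₂
      _ ∼ʷ ctrl (Sum.elim w₂ w₁) q := ctrl_ctrl_wireEquivalent w₁ w₂ q
      _ ∼ʷ ctrl (Sum.elim w₁ w₂) q := by
        simpa using ctrl_wireEquivalent_ctrl_comp (sumComm _ _) (Sum.elim w₂ w₁) q
      _ ∼ʷ ctrl (Fin.append w₁ w₂) q := by
        have happend : Sum.elim w₁ w₂ ∘ finSumFinEquiv.symm = Fin.append w₁ w₂ := by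
          rw [comp_symm_eq]
          ext (i | j) <;> simp
        exact happend ▸ ctrl_wireEquivalent_ctrl_comp finSumFinEquiv (Sum.elim w₁ w₂) q
      _ ∼ʷ controlledPerm (Fin.append w₁ w₂) q := ctrl_wireEquivalent_controlledPerm _ q

theorem controlledPerm_mem_controlledPerms {k ℓ : ℕ} {P : Set (Perm (Fin ℓ → A))}
    (w : Fin k → A) {p : Perm (Fin ℓ → A)} (hp : p ∈ P) :
    controlledPerm w p ∈ ControlledPerms k P :=
  ⟨w, p, hp, 1, by rw [← rewire_eq_conj]; rfl⟩

def ControlledExtensions {ℓ : ℕ} (k : ℕ) (P : Set (Perm (Fin ℓ → A))) (N : ℕ) :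
    Set (Perm (Fin N → A)) :=
  {g | ∃ p ∈ ControlledPerms k P, IsExtensionOf p g}

theorem rewire_ctrl_mem_controlledExtensions {k ℓ m N M : ℕ} {P : Set (Perm (Fin ℓ → A))}
    (w : Fin m → A) (ρ : Fin m ⊕ Fin N ≃ Fin M) {s : Perm (Fin N → A)}
    (hs : s ∈ ControlledExtensions k P N) :
    rewire ρ (ctrl w s) ∈ ControlledExtensions (k + m) P M := by
  obtain ⟨_, ⟨v, p, hp, δ, rfl⟩, hle, γ, rfl⟩ := hs
  rw [← rewire_eq_conj, ← rewire_eq_conj]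
  have hM : M = m + N := by simpa using (Fintype.card_congr ρ).symm
  have hle' : k + m + ℓ ≤ M := by omega
  refine ⟨_, controlledPerm_mem_controlledPerms (Fin.append v w) hp, hle',
    wireEquivalent_iff_conj.1 ?_⟩
  calc oplusId hle' (controlledPerm (Fin.append v w) p)
      _ ∼ʷ oplusIdSum (controlledPerm (Fin.append v w) p) :=
        (oplusIdSum_wireEquivalent_oplusId hle' _).symm
      _ ∼ʷ oplusIdSum (R := Fin (N - (k + ℓ))) (ctrl w (controlledPerm v p)) :=
        (ctrl_controlledPerm_wireEquivalent v w p).symm.oplusIdSum (finCongr (by omega))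
      _ ∼ʷ ctrl w (oplusIdSum (controlledPerm v p)) := (ctrl_oplusIdSum_wireEquivalent w _).symm
      _ ∼ʷ ctrl w (oplusIdSum (rewire δ (controlledPerm v p))) :=
        ((WireEquivalent.of_rewire δ _).oplusIdSum (Equiv.refl _)).ctrl w
      _ ∼ʷ ctrl w (oplusId hle (rewire δ (controlledPerm v p))) :=
        (oplusIdSum_wireEquivalent_oplusId hle _).ctrl w
      _ ∼ʷ ctrl w (rewire γ (oplusId hle (rewire δ (controlledPerm v p)))) :=
        (WireEquivalent.of_rewire γ _).ctrl w
      _ ∼ʷ _ := .of_rewire ρ _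

end FinIndexed

theorem Subgroup.map_mem_closure_of_mapsTo {G H : Type*} [Group G] [Group H] (f : G →* H)
    {S : Set G} {T : Set H} (hST : Set.MapsTo f S T) {x : G} (hx : x ∈ Subgroup.closure S) :
    f x ∈ Subgroup.closure T := by
  have hfx := Subgroup.mem_map_of_mem f hx
  rw [MonoidHom.map_closure] at hfx
  exact Subgroup.closure_mono hST.image_subset hfx

theorem stmt8_general (A : Type*) [DecidableEq A] {l n : ℕ}
    (P : Set (Equiv.Perm (Fin l → A))) (Q : Set (Equiv.Perm (Fin n → A)))
    (h k m : ℕ)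
    (hyp : ∀ g ∈ ControlledPerms h Q, g ∈ Subgroup.closure
      {g' : Equiv.Perm (Fin (h + n) → A) | ∃ p ∈ ControlledPerms k P, IsExtensionOf p g'}) :
    ∀ g ∈ ControlledPerms (h + m) Q, g ∈ Subgroup.closure
      {g' : Equiv.Perm (Fin (h + m + n) → A) |
        ∃ p ∈ ControlledPerms (k + m) P, IsExtensionOf p g'} := by
  rintro _ ⟨w, q, hq, α, rfl⟩
  set w₁ : Fin h → A := fun i => w (Fin.castAdd m i)
  set w₂ : Fin m → A := fun i => w (Fin.natAdd h i)
  obtain ⟨ρ, hρ⟩ : ctrl w₂ (controlledPerm w₁ q) ∼ʷ rewire α (controlledPerm w q) :=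
    calc ctrl w₂ (controlledPerm w₁ q)
        _ ∼ʷ controlledPerm w q := by
          simpa only [w₁, w₂, Fin.append_castAdd_natAdd] using
            ctrl_controlledPerm_wireEquivalent w₁ w₂ q
        _ ∼ʷ _ := .of_rewire α _
  rw [← rewire_eq_conj, ← hρ]
  exact Subgroup.map_mem_closure_of_mapsTo ((rewire ρ).toMonoidHom.comp (ctrl w₂))
    (fun _ hs => rewire_ctrl_mem_controlledExtensions w₂ ρ hs)
    (hyp _ (controlledPerm_mem_controlledPerms w₁ hq))

/-- adding control wires: if every `h`-controlled `Q`-permutation lies in the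
subgroup generated by extensions of `k`-controlled `P`-permutations, then every
`(h+m)`-controlled `Q`-permutation lies in the subgroup generated by extensions of
`(k+m)`-controlled `P`-permutations. -/
theorem stmt8 (A : Type*) [Fintype A] [DecidableEq A] {l n : ℕ}
    (P : Set (Equiv.Perm (Fin l → A))) (Q : Set (Equiv.Perm (Fin n → A)))
    (h k m : ℕ) (harity : k + l ≤ h + n)
    (hyp : ∀ g ∈ ControlledPerms h Q, g ∈ Subgroup.closure
      {g' : Equiv.Perm (Fin (h + n) → A) | ∃ p ∈ ControlledPerms k P, IsExtensionOf p g'}) :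
    ∀ g ∈ ControlledPerms (h + m) Q, g ∈ Subgroup.closure
      {g' : Equiv.Perm (Fin (h + m + n) → A) |
        ∃ p ∈ ControlledPerms (k + m) P, IsExtensionOf p g'} :=
  stmt8_general A P Q h k m hyp
end

section
/- Let A be a finite set and let n > |A|. Two words u, v ∈ A^n are connected by a finite sequence of moves, each of which cyclically rotates three consecutive symbols (i.e., replaces a word of the form x·a·b·c·y by x·b·c·a·y, where a,b,c ∈ A and x, y are words with |x|+|y| = n−3), if and only if u and v have the same weight. -/
/-- The weight of a word `x ∈ A^n`: the number of occurrences of each symbol. -/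
def weight {A : Type*} [DecidableEq A] {n : ℕ} (x : Fin n → A) : A → ℕ :=
  fun a => (Finset.univ.filter fun i => x i = a).card

/-- The `3`-cycle of indices `i ↦ i+1 ↦ i+2 ↦ i` in `Fin n`. -/
def rot3 {n : ℕ} (i : Fin n) (hi : (i : ℕ) + 2 < n) : Equiv.Perm (Fin n) :=
  Equiv.swap i ⟨(i : ℕ) + 1, by omega⟩ *
    Equiv.swap ⟨(i : ℕ) + 1, by omega⟩ ⟨(i : ℕ) + 2, hi⟩

/-- One move cyclically rotating three consecutive symbols: `x·a·b·c·y` becomes `x·b·c·a·y`. -/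
def rotStep {A : Type*} {n : ℕ} (u v : Fin n → A) : Prop :=
  ∃ (i : Fin n) (hi : (i : ℕ) + 2 < n), v = fun j => u (rot3 i hi j)

/-!
Rotating `x·a·b·c·y` into `x·b·c·a·y` permutes positions by a 3-cycle, so it preserves the weight.
Conversely, words of equal weight differ by some permutation of positions. The rotation at `i` is
the product `s_i s_(i+1)` of adjacent transpositions, so telescoping gives every product `s_a s_b`,
and hence every even permutation, as a product of rotations. An odd permutation is made even by
first swapping two positions carrying the same letter; such positions exist because `n > |A|`.
-/

open Equiv Equiv.Perm Relation

section Weight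

variable {A : Type*} [DecidableEq A] {n : ℕ}

lemma weight_comp_perm (u : Fin n → A) (σ : Perm (Fin n)) : weight (u ∘ σ) = weight u := by
  funext a
  exact Finset.card_equiv σ (by simp)

lemma exists_perm_of_weight_eq {u v : Fin n → A} (h : weight u = weight v) :
    ∃ σ : Perm (Fin n), v = u ∘ σ := by
  have hfiber (a : A) : Fintype.card {i // u i = a} = Fintype.card {i // v i = a} := by
    simpa [weight, Fintype.card_subtype] using congrFun h a
  let e (a : A) := Fintype.equivOfCardEq (hfiber a)
  refine ⟨(ofFiberEquiv e)⁻¹, funext fun j => ?_⟩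
  have := ofFiberEquiv_map e ((ofFiberEquiv e).symm j)
  rwa [apply_symm_apply] at this

lemma weight_eq_of_reflTransGen_rotStep {u v : Fin n → A} (h : ReflTransGen rotStep u v) :
    weight u = weight v := by
  induction h with
  | refl => rfl
  | tail _ hstep ih =>
    obtain ⟨i, hi, rfl⟩ := hstep
    exact ih.trans (weight_comp_perm _ (rot3 i hi)).symm

end Weight

lemma comp_swap_eq_self {α β : Type*} [DecidableEq α] {f : α → β} {i j : α} (h : f i = f j) :
    f ∘ swap i j = f := by
  rw [comp_swap_eq_update, h, Function.update_eq_self, ← h, Function.update_eq_self]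

section RotSubgroup

variable {n m : ℕ}

def rotSubgroup (n : ℕ) : Subgroup (Perm (Fin n)) :=
  Subgroup.closure {σ | ∃ i hi, rot3 i hi = σ}

lemma rot3_mem_rotSubgroup (i : Fin n) (hi : (i : ℕ) + 2 < n) : rot3 i hi ∈ rotSubgroup n :=
  Subgroup.subset_closure ⟨i, hi, rfl⟩

lemma rot3_isThreeCycle (i : Fin n) (hi : (i : ℕ) + 2 < n) : (rot3 i hi).IsThreeCycle := by
  have := isThreeCycle_swap_mul_swap_same (a := (⟨i + 1, by omega⟩ : Fin n)) (b := i)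
    (c := ⟨i + 2, hi⟩) (by simp [Fin.ext_iff]) (by simp [Fin.ext_iff]) (by simp [Fin.ext_iff])
  rwa [swap_comm] at this

lemma rot3_inv (i : Fin n) (hi : (i : ℕ) + 2 < n) : (rot3 i hi)⁻¹ = rot3 i hi * rot3 i hi := by
  rw [inv_eq_iff_mul_eq_one, ← pow_three, ← (rot3_isThreeCycle i hi).orderOf, pow_orderOf_eq_one]

lemma rotSubgroup_le_alternatingGroup : rotSubgroup n ≤ alternatingGroup (Fin n) := by
  rw [rotSubgroup, Subgroup.closure_le]
  rintro _ ⟨i, hi, rfl⟩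
  exact (rot3_isThreeCycle i hi).sign

lemma reflTransGen_rotStep_comp {A : Type*} {σ : Perm (Fin n)} (hσ : σ ∈ rotSubgroup n)
    (u : Fin n → A) : ReflTransGen rotStep u (u ∘ σ) := by
  induction hσ using Subgroup.closure_induction_left generalizing u with
  | one => exact .refl
  | mul_left _ hx y _ ih =>
    obtain ⟨i, hi, rfl⟩ := hx
    exact .head ⟨i, hi, rfl⟩ (ih _)
  | inv_mul_cancel _ hx y _ ih =>
    obtain ⟨i, hi, rfl⟩ := hx
    rw [rot3_inv, mul_assoc]
    exact .head ⟨i, hi, rfl⟩ (.head ⟨i, hi, rfl⟩ (ih _))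

abbrev adjSwap (k : Fin m) : Perm (Fin (m + 1)) := swap k.castSucc k.succ

lemma adjSwap_mul_adjSwap_succ (k : Fin m) (hk : (k : ℕ) + 1 < m) :
    adjSwap k * adjSwap ⟨k + 1, hk⟩ = rot3 k.castSucc (by simp; omega) := rfl

lemma adjSwap_mul_adjSwap_mem_of_le {a b : ℕ} (hab : a ≤ b) (hb : b < m) :
    adjSwap ⟨a, by omega⟩ * adjSwap ⟨b, hb⟩ ∈ rotSubgroup (m + 1) := by
  -- `s_a s_(b+1) = (s_a s_b) (s_b s_(b+1))`, and `s_b s_(b+1)` is a rotation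
  induction b, hab using Nat.le_induction with
  | base => simp
  | succ b hab ih =>
    have hrot := rot3_mem_rotSubgroup (Fin.castSucc (⟨b, by omega⟩ : Fin m)) (by simp; omega)
    rw [← adjSwap_mul_adjSwap_succ _ hb] at hrot
    have := mul_mem (ih (by omega)) hrot
    rwa [mul_assoc, swap_mul_self_mul] at this

lemma adjSwap_mul_adjSwap_mem_rotSubgroup (a b : Fin m) :
    adjSwap a * adjSwap b ∈ rotSubgroup (m + 1) := by
  rcases le_total a b with hab | hba
  · exact adjSwap_mul_adjSwap_mem_of_le hab b.2
  · simpa using inv_mem (adjSwap_mul_adjSwap_mem_of_le hba a.2)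

/-- The rotations have index at most two in the symmetric group. -/
lemma mem_rotSubgroup_or_exists_adjSwap_mul_mem (σ : Perm (Fin (m + 1))) :
    σ ∈ rotSubgroup (m + 1) ∨ ∃ k, adjSwap k * σ ∈ rotSubgroup (m + 1) := by
  have hσ : σ ∈ Submonoid.closure (Set.range adjSwap) := by
    rw [mclosure_swap_castSucc_succ]; trivial
  induction hσ using Submonoid.closure_induction_left with
  | one => exact .inl (one_mem _)
  | mul_left _ hx τ _ ih =>
    obtain ⟨i, rfl⟩ := hx
    rcases ih with hτ | ⟨k, hk⟩
    · exact .inr ⟨i, by rwa [swap_mul_self_mul]⟩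
    · have := mul_mem (adjSwap_mul_adjSwap_mem_rotSubgroup i k) hk
      rw [mul_assoc, swap_mul_self_mul] at this
      exact .inl this

lemma rotSubgroup_eq_alternatingGroup : rotSubgroup n = alternatingGroup (Fin n) := by
  refine le_antisymm rotSubgroup_le_alternatingGroup fun σ hσ => ?_
  cases n with
  | zero => simp [Subsingleton.elim σ 1]
  | succ m =>
    refine (mem_rotSubgroup_or_exists_adjSwap_mul_mem σ).resolve_right ?_
    rintro ⟨k, hk⟩
    have := rotSubgroup_le_alternatingGroup hk
    rw [mem_alternatingGroup, Perm.sign_mul, sign_swap (Fin.castSucc_lt_succ).ne,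
      mem_alternatingGroup.mp hσ] at this
    exact absurd this (by decide)

end RotSubgroup

lemma exists_even_perm_comp_eq {A : Type*} [Fintype A] {n : ℕ} (hn : Fintype.card A < n)
    (u : Fin n → A) (σ : Perm (Fin n)) : ∃ τ ∈ alternatingGroup (Fin n), u ∘ τ = u ∘ σ := by
  rcases Int.units_eq_one_or (sign σ) with hσ | hσ
  · exact ⟨σ, hσ, rfl⟩
  obtain ⟨i, j, hij, hu⟩ := Fintype.exists_ne_map_eq_of_card_lt u (by simpa using hn)
  refine ⟨swap i j * σ, ?_, ?_⟩
  · rw [mem_alternatingGroup, Perm.sign_mul, sign_swap hij, hσ]; decide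
  · rw [coe_mul, ← Function.comp_assoc, comp_swap_eq_self hu]

/-- for `n > |A|`, two words of `A^n` are connected by a finite sequence of
rotations of three consecutive symbols iff they have the same weight. -/
theorem stmt15 (A : Type*) [Fintype A] [DecidableEq A] (n : ℕ) (hn : Fintype.card A < n)
    (u v : Fin n → A) :
    Relation.ReflTransGen rotStep u v ↔ weight u = weight v := by
  refine ⟨weight_eq_of_reflTransGen_rotStep, fun hw => ?_⟩
  obtain ⟨σ, rfl⟩ := exists_perm_of_weight_eq hw
  obtain ⟨τ, hτ, hτσ⟩ := exists_even_perm_comp_eq hn u σ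
  rw [← hτσ]
  exact reflTransGen_rotStep_comp (rotSubgroup_eq_alternatingGroup ▸ hτ) u
end
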